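/- arXiv:2501.18132 — 5 statements merged into one kernel-verified Lean document; each statement's English description precedes it below -/
import Mathlib

section
/- For every natural number d ≥ 3 and all vectors x = (s,t) and y = (u,v) in ℂ² that are both nonzero and not proportional to each other (i.e. they represent distinct points of P¹), the four vectors ∂_s ι̃_d(x), ∂_t ι̃_d(x), ∂_s ι̃_d(y), ∂_t ι̃_d(y) of ℂ^(d+1) are linearly independent over ℂ. (Equivalently: the embedded tangent lines of the degree-d rational normal curve at any two distinct points are disjoint in P^d, i.e. the rational normal curve of degree d ≥ 3 is skew.) -/
set_option maxHeartbeats 1000000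

open Matrix in
lemma det_fin_four' (M : Matrix (Fin 4) (Fin 4) ℂ) : M.det =
    M 0 0 * (M 1 1 * (M 2 2 * M 3 3 - M 2 3 * M 3 2) - M 1 2 * (M 2 1 * M 3 3 - M 2 3 * M 3 1)
      + M 1 3 * (M 2 1 * M 3 2 - M 2 2 * M 3 1))
  - M 0 1 * (M 1 0 * (M 2 2 * M 3 3 - M 2 3 * M 3 2) - M 1 2 * (M 2 0 * M 3 3 - M 2 3 * M 3 0)
      + M 1 3 * (M 2 0 * M 3 2 - M 2 2 * M 3 0))
  + M 0 2 * (M 1 0 * (M 2 1 * M 3 3 - M 2 3 * M 3 1) - M 1 1 * (M 2 0 * M 3 3 - M 2 3 * M 3 0)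
      + M 1 3 * (M 2 0 * M 3 1 - M 2 1 * M 3 0))
  - M 0 3 * (M 1 0 * (M 2 1 * M 3 2 - M 2 2 * M 3 1) - M 1 1 * (M 2 0 * M 3 2 - M 2 2 * M 3 0)
      + M 1 2 * (M 2 0 * M 3 1 - M 2 1 * M 3 0)) := by
  rw [Matrix.det_succ_row_zero]
  simp [Fin.sum_univ_succ, Matrix.det_fin_three, Fin.succAbove]
  ring

lemma li_of_det4 {n : ℕ} (w : Fin 4 → Fin n → ℂ) (c : Fin 4 → Fin n)
    (h : (Matrix.of fun i j => w i (c j)).det ≠ 0) : LinearIndependent ℂ w := by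
  apply LinearIndependent.of_comp (LinearMap.funLeft ℂ ℂ c)
  exact Matrix.linearIndependent_rows_iff_isUnit.2
    ((Matrix.isUnit_iff_isUnit_det _).2 (isUnit_iff_ne_zero.2 h))

/-- abbreviation for the family of four vectors, with degree `d`. -/
def rncFam (d : ℕ) (s t u v : ℂ) : Fin 4 → Fin (d + 1) → ℂ :=
  ![(fun k : Fin (d + 1) => ((d - (k : ℕ) : ℕ) : ℂ) * s ^ (d - (k : ℕ) - 1) * t ^ (k : ℕ)),
    (fun k : Fin (d + 1) => (((k : ℕ) : ℂ)) * s ^ (d - (k : ℕ)) * t ^ ((k : ℕ) - 1)),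
    (fun k : Fin (d + 1) => ((d - (k : ℕ) : ℕ) : ℂ) * u ^ (d - (k : ℕ) - 1) * v ^ (k : ℕ)),
    (fun k : Fin (d + 1) => (((k : ℕ) : ℂ)) * u ^ (d - (k : ℕ)) * v ^ ((k : ℕ) - 1))]

lemma hf4ne (f : ℕ) : ((f : ℂ) + 4) ≠ 0 := by
  have h := Nat.cast_ne_zero (R := ℂ).mpr (show f + 4 ≠ 0 by omega)
  push_cast at h
  exact h

/-- main case: `t ≠ 0`, `v ≠ 0`, degree `f + 4`. -/
lemma rnc_main (f : ℕ) (s t u v : ℂ) (ht : t ≠ 0) (hv : v ≠ 0)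
    (hδ : s * v - t * u ≠ 0) : LinearIndependent ℂ (rncFam (f + 4) s t u v) := by
  apply li_of_det4 _ ![⟨f+1, by omega⟩, ⟨f+2, by omega⟩, ⟨f+3, by omega⟩, ⟨f+4, by omega⟩]
  have hRHS : ((f:ℂ)+4)^2 * (s*v - t*u)^4 * (t^(f+1))^2 * (v^(f+1))^2 ≠ 0 :=
    mul_ne_zero (mul_ne_zero (mul_ne_zero (pow_ne_zero _ (hf4ne f)) (pow_ne_zero _ hδ))
      (pow_ne_zero _ (pow_ne_zero _ ht))) (pow_ne_zero _ (pow_ne_zero _ hv))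
  rw [det_fin_four']
  refine ne_of_eq_of_ne ?_ hRHS
  simp only [rncFam, Matrix.of_apply, Matrix.cons_val_zero, Matrix.cons_val_one,
    Matrix.cons_val_two, Matrix.cons_val_three, Matrix.head_cons, Matrix.vecHead,
    Matrix.vecTail, Function.comp_apply, Fin.val_mk, Fin.succ_zero_eq_one, Fin.succ_one_eq_two,
    show f+4-(f+1) = 3 from by omega, show f+4-(f+2) = 2 from by omega,
    show f+4-(f+3) = 1 from by omega, show f+4-(f+4) = 0 from by omega,
    show f+1-1 = f from by omega, show f+2-1 = f+1 from by omega,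
    show f+3-1 = f+2 from by omega, show f+4-1 = f+3 from by omega]
  push_cast
  ring

/-- s-side case: `s ≠ 0`, `u ≠ 0`, degree `f + 4`. -/
lemma rnc_sside (f : ℕ) (s t u v : ℂ) (hs : s ≠ 0) (hu : u ≠ 0)
    (hδ : s * v - t * u ≠ 0) : LinearIndependent ℂ (rncFam (f + 4) s t u v) := by
  apply li_of_det4 _ ![⟨0, by omega⟩, ⟨1, by omega⟩, ⟨2, by omega⟩, ⟨3, by omega⟩]
  have hRHS : ((f:ℂ)+4)^2 * (s*v - t*u)^4 * (s^(f+1))^2 * (u^(f+1))^2 ≠ 0 :=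
    mul_ne_zero (mul_ne_zero (mul_ne_zero (pow_ne_zero _ (hf4ne f)) (pow_ne_zero _ hδ))
      (pow_ne_zero _ (pow_ne_zero _ hs))) (pow_ne_zero _ (pow_ne_zero _ hu))
  rw [det_fin_four']
  refine ne_of_eq_of_ne ?_ hRHS
  simp only [rncFam, Matrix.of_apply, Matrix.cons_val_zero, Matrix.cons_val_one,
    Matrix.cons_val_two, Matrix.cons_val_three, Matrix.head_cons, Matrix.vecHead,
    Matrix.vecTail, Function.comp_apply, Fin.val_mk, Fin.succ_zero_eq_one, Fin.succ_one_eq_two,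
    Nat.sub_zero, Nat.sub_self, Nat.zero_sub,
    show f+4-1 = f+3 from by omega, show f+4-2 = f+2 from by omega,
    show f+4-3 = f+1 from by omega,
    show f+3-1 = f+2 from by omega, show f+2-1 = f+1 from by omega,
    show f+1-1 = f from by omega,
    show (1:ℕ)-1 = 0 from rfl, show (2:ℕ)-1 = 1 from rfl, show (3:ℕ)-1 = 2 from rfl]
  push_cast
  ring

/-- degenerate case: `t = 0`, `u = 0`, degree `f + 4`. -/
lemma rnc_deg1 (f : ℕ) (s v : ℂ) (hs : s ≠ 0) (hv : v ≠ 0) :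
    LinearIndependent ℂ (rncFam (f + 4) s 0 0 v) := by
  apply li_of_det4 _ ![⟨0, by omega⟩, ⟨1, by omega⟩, ⟨f+3, by omega⟩, ⟨f+4, by omega⟩]
  have hRHS : ((f:ℂ)+4)^2 * (s^(f+3))^2 * (v^(f+3))^2 ≠ 0 :=
    mul_ne_zero (mul_ne_zero (pow_ne_zero _ (hf4ne f)) (pow_ne_zero _ (pow_ne_zero _ hs)))
      (pow_ne_zero _ (pow_ne_zero _ hv))
  rw [det_fin_four']
  refine ne_of_eq_of_ne ?_ hRHS
  simp only [rncFam, Matrix.of_apply, Matrix.cons_val_zero, Matrix.cons_val_one,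
    Matrix.cons_val_two, Matrix.cons_val_three, Matrix.head_cons, Matrix.vecHead,
    Matrix.vecTail, Function.comp_apply, Fin.val_mk, Fin.succ_zero_eq_one, Fin.succ_one_eq_two,
    Nat.sub_zero, Nat.sub_self, Nat.zero_sub,
    show f+4-1 = f+3 from by omega, show f+3-1 = f+2 from by omega,
    show f+4-(f+3) = 1 from by omega, show f+4-(f+4) = 0 from by omega,
    show (1:ℕ)-1 = 0 from rfl,
    pow_zero, pow_one,
    zero_pow (show f+4 ≠ 0 by omega), zero_pow (show f+3 ≠ 0 by omega),
    zero_pow (show f+2 ≠ 0 by omega),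
    mul_zero, zero_mul, mul_one, one_mul, Nat.cast_zero, Nat.cast_one]
  push_cast
  ring

/-- degenerate case: `s = 0`, `v = 0`, degree `f + 4`. -/
lemma rnc_deg2 (f : ℕ) (t u : ℂ) (ht : t ≠ 0) (hu : u ≠ 0) :
    LinearIndependent ℂ (rncFam (f + 4) 0 t u 0) := by
  apply li_of_det4 _ ![⟨0, by omega⟩, ⟨1, by omega⟩, ⟨f+3, by omega⟩, ⟨f+4, by omega⟩]
  have hRHS : ((f:ℂ)+4)^2 * (t^(f+3))^2 * (u^(f+3))^2 ≠ 0 :=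
    mul_ne_zero (mul_ne_zero (pow_ne_zero _ (hf4ne f)) (pow_ne_zero _ (pow_ne_zero _ ht)))
      (pow_ne_zero _ (pow_ne_zero _ hu))
  rw [det_fin_four']
  refine ne_of_eq_of_ne ?_ hRHS
  simp only [rncFam, Matrix.of_apply, Matrix.cons_val_zero, Matrix.cons_val_one,
    Matrix.cons_val_two, Matrix.cons_val_three, Matrix.head_cons, Matrix.vecHead,
    Matrix.vecTail, Function.comp_apply, Fin.val_mk, Fin.succ_zero_eq_one, Fin.succ_one_eq_two,
    Nat.sub_zero, Nat.sub_self, Nat.zero_sub,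
    show f+4-1 = f+3 from by omega, show f+3-1 = f+2 from by omega,
    show f+4-(f+3) = 1 from by omega, show f+4-(f+4) = 0 from by omega,
    show (1:ℕ)-1 = 0 from rfl,
    pow_zero, pow_one,
    zero_pow (show f+4 ≠ 0 by omega), zero_pow (show f+3 ≠ 0 by omega),
    zero_pow (show f+2 ≠ 0 by omega),
    mul_zero, zero_mul, mul_one, one_mul, Nat.cast_zero, Nat.cast_one]
  push_cast
  ring

/-- The rational normal curve of degree `d ≥ 3` is skew: for any two
distinct points of `P¹`, represented by nonzero non-proportional vectors `(s, t)` and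
`(u, v)` in `ℂ²`, the four partial-derivative vectors of the lifting
`ι̃_d(s,t)_k = s^(d−k) t^k` at the two points are linearly independent in `ℂ^(d+1)`. -/
theorem rational_normal_curve_skew (d : ℕ) (hd : 3 ≤ d) (s t u v : ℂ)
    (hx : (s, t) ≠ (0, 0)) (hy : (u, v) ≠ (0, 0))
    (hprop : ∀ c : ℂ, (u, v) ≠ (c * s, c * t)) :
    LinearIndependent ℂ
      ![(fun k : Fin (d + 1) => ((d - (k : ℕ) : ℕ) : ℂ) * s ^ (d - (k : ℕ) - 1) * t ^ (k : ℕ)),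
        (fun k : Fin (d + 1) => (((k : ℕ) : ℂ)) * s ^ (d - (k : ℕ)) * t ^ ((k : ℕ) - 1)),
        (fun k : Fin (d + 1) => ((d - (k : ℕ) : ℕ) : ℂ) * u ^ (d - (k : ℕ) - 1) * v ^ (k : ℕ)),
        (fun k : Fin (d + 1) => (((k : ℕ) : ℂ)) * u ^ (d - (k : ℕ)) * v ^ ((k : ℕ) - 1))] := by
  have hst : ¬(s = 0 ∧ t = 0) := fun ⟨a, b⟩ => hx (by rw [a, b])
  have huv : ¬(u = 0 ∧ v = 0) := fun ⟨a, b⟩ => hy (by rw [a, b])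
  have hδ : s * v - t * u ≠ 0 := by
    intro h0
    have h1 : s * v = t * u := sub_eq_zero.mp h0
    by_cases hs : s = 0
    · have ht : t ≠ 0 := fun h => hst ⟨hs, h⟩
      have hu : u = 0 := by
        have h2 : t * u = 0 := by rw [← h1, hs, zero_mul]
        rcases mul_eq_zero.mp h2 with h | h
        · exact absurd h ht
        · exact h
      exact hprop (v / t) (by rw [hs, hu, mul_zero, div_mul_cancel₀ v ht])
    · refine hprop (u / s) ?_
      have hv : v = u / s * t := by
        field_simp
        linear_combination h1
      rw [div_mul_cancel₀ u hs, ← hv]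
  show LinearIndependent ℂ (rncFam d s t u v)
  rcases Nat.lt_or_ge d 4 with h4 | h4
  · -- d = 3
    have hd3 : d = 3 := by omega
    subst hd3
    apply li_of_det4 _ ![⟨0, by omega⟩, ⟨1, by omega⟩, ⟨2, by omega⟩, ⟨3, by omega⟩]
    have hRHS : (9 : ℂ) * (s * v - t * u) ^ 4 ≠ 0 :=
      mul_ne_zero (by norm_num) (pow_ne_zero _ hδ)
    rw [det_fin_four']
    refine ne_of_eq_of_ne ?_ hRHS
    simp only [rncFam, Matrix.of_apply, Matrix.cons_val_zero, Matrix.cons_val_one,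
      Matrix.cons_val_two, Matrix.cons_val_three, Matrix.head_cons, Matrix.vecHead,
      Matrix.vecTail, Function.comp_apply, Fin.val_mk, Fin.succ_zero_eq_one, Fin.succ_one_eq_two]
    norm_num
    ring
  · obtain ⟨f, rfl⟩ := Nat.exists_eq_add_of_le' h4
    by_cases ht : t = 0
    · have hs : s ≠ 0 := fun h => hst ⟨h, ht⟩
      by_cases hu : u = 0
      · have hv : v ≠ 0 := fun h => huv ⟨hu, h⟩
        subst ht; subst hu
        exact rnc_deg1 f s v hs hv
      · exact rnc_sside f s t u v hs hu hδ
    · by_cases hv : v = 0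
      · have hu : u ≠ 0 := fun h => huv ⟨h, hv⟩
        by_cases hs : s = 0
        · subst hs; subst hv
          exact rnc_deg2 f t u ht hu
        · exact rnc_sside f s t u v hs hu hδ
      · exact rnc_main f s t u v ht hv hδ
end

section
/- Let n ≥ 1 and d ≥ 3 be natural numbers, and let A be the set of all exponent functions α : Fin (n+1) → ℕ with Σ_i α(i) = d. Define the Veronese lifting ι̃ : ℂ^(n+1) → (A → ℂ) by ι̃(x)_α = Π_i x_i^(α i), with partial derivatives (∂_l ι̃(x))_α = α(l) · x^(α − e_l) (interpreted as 0 when α(l) = 0). Then for all nonzero, non-proportional x, y ∈ ℂ^(n+1), the submodules span_ℂ{∂_0 ι̃(x), …, ∂_n ι̃(x)} and span_ℂ{∂_0 ι̃(y), …, ∂_n ι̃(y)} of (A → ℂ) intersect trivially. (Equivalently: every Veronese embedding of P^n of degree d ≥ 3 is skew.) -/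
open Finset

/-- The index set of the degree-`d` Veronese embedding of `P^n`:
exponent functions `α : Fin (n+1) → ℕ` of total degree `d`. -/
def VeroneseIndex (n d : ℕ) : Type :=
  {α : Fin (n + 1) → ℕ // (∑ i, α i) = d}

/-- The `l`-th partial derivative of the Veronese lifting
`ι̃(x)_α = ∏ i, x i ^ α i`, namely `(∂_l ι̃(x))_α = α l · x^(α − e_l)`. -/
def veronesePartial (n d : ℕ) (x : Fin (n + 1) → ℂ) (l : Fin (n + 1)) :
    VeroneseIndex n d → ℂ :=
  fun α => ((α.1 l : ℕ) : ℂ) * ∏ i, x i ^ (α.1 i - if i = l then 1 else 0)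

/-- dot product -/
noncomputable def cdot {m : ℕ} (c z : Fin m → ℂ) : ℂ := ∑ i, c i * z i

lemma cdot_add {m : ℕ} (c z w : Fin m → ℂ) : cdot c (z + w) = cdot c z + cdot c w := by
  simp [cdot, mul_add, Finset.sum_add_distrib]

lemma cdot_sub {m : ℕ} (c z w : Fin m → ℂ) : cdot c (z - w) = cdot c z - cdot c w := by
  simp [cdot, mul_sub, Finset.sum_sub_distrib]

lemma cdot_smul {m : ℕ} (c : Fin m → ℂ) (s : ℂ) (z : Fin m → ℂ) :
    cdot c (s • z) = s * cdot c z := by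
  unfold cdot
  rw [Finset.mul_sum]
  exact Finset.sum_congr rfl fun i _ => by simp [mul_comm, mul_left_comm]

lemma cdot_single {m : ℕ} (c : Fin m → ℂ) (j : Fin m) :
    cdot c (Pi.single j 1) = c j := by
  simp [cdot, Pi.single_apply, mul_ite]

/-- pairing with the degree-`d` dual "polynomial evaluation" functional at `z` -/
noncomputable def vPair (n d : ℕ) (z : Fin (n + 1) → ℂ) (v : VeroneseIndex n d → ℂ) : ℂ :=
  ∑ a ∈ Finset.piAntidiag (Finset.univ : Finset (Fin (n + 1))) d,
    if h : (∑ i, a i) = d then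
      (Nat.multinomial Finset.univ a : ℂ) * v ⟨a, h⟩ * ∏ i, z i ^ a i
    else 0

lemma mult_step {m d : ℕ} (hd : 1 ≤ d) (b : Fin m → ℕ) (l : Fin m)
    (hb : ∑ i, b i = d - 1) :
    Nat.multinomial Finset.univ (fun i => b i + if i = l then 1 else 0) * (b l + 1)
      = d * Nat.multinomial Finset.univ b := by
  set a : Fin m → ℕ := fun i => b i + if i = l then 1 else 0 with ha
  have hprodb : 0 < ∏ i, (b i).factorial :=
    Finset.prod_pos fun i _ => Nat.factorial_pos _
  have hsuma : ∑ i, a i = d := by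
    have h2 : ∑ i, a i = (∑ i, b i) + ∑ i, (if i = l then 1 else 0) := by
      rw [← Finset.sum_add_distrib]
    have h1 : ∑ i, (if i = l then (1:ℕ) else 0) = 1 := by
      rw [Finset.sum_ite_eq' Finset.univ l (fun _ => 1)]; simp
    omega
  have hfa : ∏ i, (a i).factorial = (b l + 1) * ∏ i, (b i).factorial := by
    have h3 : ∀ i, (a i).factorial = (if i = l then b i + 1 else 1) * (b i).factorial := by
      intro i
      by_cases h : i = l <;> simp [ha, h, Nat.factorial_succ]
    rw [Finset.prod_congr rfl (fun i _ => h3 i), Finset.prod_mul_distrib,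
      Finset.prod_ite_eq' Finset.univ l (fun i => b i + 1)]
    simp
  apply Nat.eq_of_mul_eq_mul_left hprodb
  have h1 : (∏ i, (b i).factorial) * (Nat.multinomial Finset.univ a * (b l + 1))
      = (∏ i, (a i).factorial) * Nat.multinomial Finset.univ a := by
    rw [hfa]; ring
  rw [h1, Nat.multinomial_spec, hsuma]
  have h2 : (∏ i, (b i).factorial) * (d * Nat.multinomial Finset.univ b)
      = d * ((∏ i, (b i).factorial) * Nat.multinomial Finset.univ b) := by ring
  rw [h2, Nat.multinomial_spec, hb]
  have h4 : d = d - 1 + 1 := by omega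
  conv_lhs => rw [h4]
  rw [Nat.factorial_succ]
  congr 1
  omega

lemma vPair_partial (n d : ℕ) (hd : 1 ≤ d) (x z : Fin (n + 1) → ℂ) (l : Fin (n + 1)) :
    vPair n d z (veronesePartial n d x l)
      = (d : ℂ) * z l * (cdot x z) ^ (d - 1) := by
  classical
  unfold vPair
  have hstep1 : ∀ a ∈ Finset.piAntidiag (Finset.univ : Finset (Fin (n + 1))) d,
      (if h : (∑ i, a i) = d then
        (Nat.multinomial Finset.univ a : ℂ) *
          veronesePartial n d x l ⟨a, h⟩ * ∏ i, z i ^ a i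
      else 0)
      = (Nat.multinomial Finset.univ a : ℂ) *
          (((a l : ℕ) : ℂ) * ∏ i, x i ^ (a i - if i = l then 1 else 0)) * ∏ i, z i ^ a i := by
    intro a hamem
    have h : (∑ i, a i) = d := (Finset.mem_piAntidiag.mp hamem).1
    rw [dif_pos h]
    rfl
  rw [Finset.sum_congr rfl hstep1]
  -- restrict to terms with a l ≠ 0
  rw [← Finset.sum_filter_of_ne (p := fun a => a l ≠ 0)
    (by intro a _ hne h0; exact hne (by simp [h0]))]
  -- rewrite the RHS as a sum over piAntidiag univ (d-1)
  have hrhs : (d : ℂ) * z l * (cdot x z) ^ (d - 1)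
      = ∑ b ∈ Finset.piAntidiag (Finset.univ : Finset (Fin (n + 1))) (d - 1),
          (d : ℂ) * z l * ((Nat.multinomial Finset.univ b : ℂ) * ∏ i, (x i * z i) ^ b i) := by
    rw [← Finset.mul_sum]
    congr 1
    unfold cdot
    rw [Finset.sum_pow_eq_sum_piAntidiag]
  rw [hrhs]
  refine Finset.sum_nbij' (i := fun a => fun i => a i - if i = l then 1 else 0)
    (j := fun b => fun i => b i + if i = l then 1 else 0) ?_ ?_ ?_ ?_ ?_
  · intro a ha
    simp only [Finset.mem_filter, Finset.mem_piAntidiag] at ha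
    obtain ⟨⟨hsum, -⟩, hal⟩ := ha
    have hsum' : (∑ i, a i) = d := hsum
    simp only [Finset.mem_piAntidiag]
    refine ⟨?_, fun i _ => Finset.mem_univ i⟩
    have hle : ∀ i, (if i = l then 1 else 0) ≤ a i := by
      intro i; by_cases h : i = l <;> simp [h] <;> omega
    have hadd : (∑ i, (a i - if i = l then 1 else 0)) + ∑ i, (if i = l then (1:ℕ) else 0)
        = ∑ i, a i := by
      rw [← Finset.sum_add_distrib]
      exact Finset.sum_congr rfl fun i _ => Nat.sub_add_cancel (hle i)
    have h1 : ∑ i, (if i = l then (1:ℕ) else 0) = 1 := by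
      rw [Finset.sum_ite_eq' Finset.univ l (fun _ => 1)]; simp
    omega
  · intro b hb
    simp only [Finset.mem_piAntidiag] at hb
    obtain ⟨hsum, -⟩ := hb
    have hsum' : (∑ i, b i) = d - 1 := hsum
    simp only [Finset.mem_filter, Finset.mem_piAntidiag]
    refine ⟨⟨?_, fun i _ => Finset.mem_univ i⟩, by simp⟩
    have hadd : (∑ i, (b i + if i = l then 1 else 0))
        = (∑ i, b i) + ∑ i, (if i = l then (1:ℕ) else 0) := Finset.sum_add_distrib
    have h1 : ∑ i, (if i = l then (1:ℕ) else 0) = 1 := by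
      rw [Finset.sum_ite_eq' Finset.univ l (fun _ => 1)]; simp
    omega
  · intro a ha
    simp only [Finset.mem_filter] at ha
    obtain ⟨-, hal⟩ := ha
    funext i
    by_cases h : i = l
    · subst h; simp; omega
    · simp [h]
  · intro b _
    funext i
    by_cases h : i = l <;> simp [h]
  · intro a ha
    simp only [Finset.mem_filter, Finset.mem_piAntidiag] at ha
    obtain ⟨⟨hsum, -⟩, hal⟩ := ha
    have hsum' : (∑ i, a i) = d := hsum
    set b : Fin (n + 1) → ℕ := fun i => a i - if i = l then 1 else 0 with hbdef
    have hab : ∀ i, a i = b i + if i = l then 1 else 0 := by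
      intro i
      by_cases h : i = l
      · subst h; simp [hbdef]; omega
      · simp [hbdef, h]
    have hbsum : ∑ i, b i = d - 1 := by
      have hadd : (∑ i, b i) + ∑ i, (if i = l then (1:ℕ) else 0) = ∑ i, a i := by
        rw [← Finset.sum_add_distrib]
        exact Finset.sum_congr rfl fun i _ => (hab i).symm
      have h1 : ∑ i, (if i = l then (1:ℕ) else 0) = 1 := by
        rw [Finset.sum_ite_eq' Finset.univ l (fun _ => 1)]; simp
      omega
    have hmult : Nat.multinomial Finset.univ a * (b l + 1)
        = d * Nat.multinomial Finset.univ b := by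
      have h5 := mult_step hd b l hbsum
      rwa [show (fun i => b i + if i = l then 1 else 0) = a from (funext fun i => (hab i).symm)]
        at h5
    have hal' : ((a l : ℕ) : ℂ) = ((b l : ℕ) : ℂ) + 1 := by
      rw [hab l]; simp
    have hxprod : (∏ i, x i ^ (a i - if i = l then 1 else 0)) = ∏ i, x i ^ b i := rfl
    have hzprod : (∏ i, z i ^ a i) = z l * ∏ i, z i ^ b i := by
      have h6 : ∀ i, z i ^ a i = z i ^ b i * (if i = l then z i else 1) := by
        intro i
        rw [hab i]
        by_cases h : i = l <;> simp [h, pow_succ]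
      rw [Finset.prod_congr rfl fun i _ => h6 i, Finset.prod_mul_distrib,
        Finset.prod_ite_eq' Finset.univ l (fun i => z i)]
      simp [mul_comm]
    rw [hxprod, hzprod, hal']
    have hxz : ∏ i, (x i * z i) ^ b i = (∏ i, x i ^ b i) * ∏ i, z i ^ b i := by
      rw [← Finset.prod_mul_distrib]
      exact Finset.prod_congr rfl fun i _ => mul_pow _ _ _
    have hcast : (Nat.multinomial Finset.univ a : ℂ) * (((b l : ℕ) : ℂ) + 1)
        = (d : ℂ) * (Nat.multinomial Finset.univ b : ℂ) := by
      exact_mod_cast congrArg (Nat.cast : ℕ → ℂ) hmult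
    rw [hxz]
    calc (Nat.multinomial Finset.univ a : ℂ) * ((((b l : ℕ) : ℂ) + 1) * ∏ i, x i ^ b i)
          * (z l * ∏ i, z i ^ b i)
        = ((Nat.multinomial Finset.univ a : ℂ) * (((b l : ℕ) : ℂ) + 1))
          * ((∏ i, x i ^ b i) * (z l * ∏ i, z i ^ b i)) := by ring
      _ = ((d : ℂ) * (Nat.multinomial Finset.univ b : ℂ))
          * ((∏ i, x i ^ b i) * (z l * ∏ i, z i ^ b i)) := by rw [hcast]
      _ = (d : ℂ) * z l * ((Nat.multinomial Finset.univ b : ℂ)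
          * ((∏ i, x i ^ b i) * ∏ i, z i ^ b i)) := by ring

lemma vPair_sum (n d : ℕ) (z : Fin (n + 1) → ℂ) (c : Fin (n + 1) → ℂ)
    (P : Fin (n + 1) → VeroneseIndex n d → ℂ) :
    vPair n d z (∑ l, c l • P l) = ∑ l, c l * vPair n d z (P l) := by
  classical
  unfold vPair
  have hmain : ∀ a ∈ Finset.piAntidiag (Finset.univ : Finset (Fin (n + 1))) d,
      (if h : (∑ i, a i) = d then
        (Nat.multinomial Finset.univ a : ℂ) * (∑ l, c l • P l) ⟨a, h⟩ * ∏ i, z i ^ a i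
      else 0)
      = ∑ l, c l * (if h : (∑ i, a i) = d then
          (Nat.multinomial Finset.univ a : ℂ) * P l ⟨a, h⟩ * ∏ i, z i ^ a i
        else 0) := by
    intro a ha
    have h : (∑ i, a i) = d := (Finset.mem_piAntidiag.mp ha).1
    rw [dif_pos h]
    have happ : (∑ l, c l • P l) ⟨a, h⟩ = ∑ l, c l * P l ⟨a, h⟩ := by
      exact Finset.sum_apply _ _ _
    rw [happ, Finset.mul_sum, Finset.sum_mul]
    refine Finset.sum_congr rfl fun l _ => ?_
    rw [dif_pos h]
    ring
  rw [Finset.sum_congr rfl hmain, Finset.sum_comm]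
  exact Finset.sum_congr rfl fun l _ => (Finset.mul_sum _ _ _).symm

lemma scalar_aux {e : ℕ} (he : 2 ≤ e) (p q r p' q' r' : ℂ)
    (H : ∀ σ τ : ℂ, (p + q * σ + r * τ) * σ ^ e = (p' + q' * σ + r' * τ) * τ ^ e) :
    p = 0 ∧ q = 0 ∧ r = 0 := by
  have he0 : e ≠ 0 := by omega
  have hm1 : ((-1 : ℂ)) ^ e ≠ 0 := pow_ne_zero _ (by norm_num)
  have h2e : (2 : ℂ) ^ e ≠ 2 := by
    intro h
    have hc : ((2 ^ e : ℕ) : ℂ) = ((2 : ℕ) : ℂ) := by push_cast; simpa using h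
    have hn : (2 : ℕ) ^ e = 2 := Nat.cast_injective hc
    have h4 : (4 : ℕ) ≤ 2 ^ e := by
      calc (4 : ℕ) = 2 ^ 2 := rfl
        _ ≤ 2 ^ e := Nat.pow_le_pow_right (by norm_num) he
    omega
  have h10 := H 1 0
  have hm0 := H (-1) 0
  have h01 := H 0 1
  have h0m := H 0 (-1)
  have h11 := H 1 1
  have h21 := H 2 1
  simp only [zero_pow he0, one_pow] at h10 hm0 h01 h0m h11 h21
  have hpq : p + q = 0 := by linear_combination h10
  have hm0' : (p - q) * (-1 : ℂ) ^ e = 0 := by linear_combination hm0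
  have hpmq : p - q = 0 := by
    rcases mul_eq_zero.mp hm0' with h' | h'
    · exact h'
    · exact absurd h' hm1
  have hp : p = 0 := by linear_combination (hpq + hpmq) / 2
  have hq : q = 0 := by linear_combination (hpq - hpmq) / 2
  have hppr : p' + r' = 0 := by linear_combination -h01
  have h0m' : (p' - r') * (-1 : ℂ) ^ e = 0 := by linear_combination -h0m
  have hpmr : p' - r' = 0 := by
    rcases mul_eq_zero.mp h0m' with h' | h'
    · exact h'
    · exact absurd h' hm1
  have hp' : p' = 0 := by linear_combination (hppr + hpmr) / 2
  have hr' : r' = 0 := by linear_combination (hppr - hpmr) / 2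
  have hrq : r = q' := by linear_combination h11 - hp - hq + hp' + hr'
  have hzero : r * ((2 : ℂ) ^ e - 2) = 0 := by
    linear_combination h21 - (2:ℂ)^e * hp - (2 * (2:ℂ)^e) * hq + hp' + hr' - 2 * hrq
  have hr : r = 0 := by
    rcases mul_eq_zero.mp hzero with h' | h'
    · exact h'
    · exact absurd (by linear_combination h') h2e
  exact ⟨hp, hq, hr⟩

lemma exists_dual {m : ℕ} (x y : Fin m → ℂ) (hx : x ≠ 0) (hy : y ≠ 0)
    (h : ∀ c : ℂ, x ≠ c • y) : ∃ u, cdot x u = 1 ∧ cdot y u = 0 := by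
  by_cases hker : ∀ z, cdot y z = 0 → cdot x z = 0
  · exfalso
    obtain ⟨j, hj⟩ : ∃ j, y j ≠ 0 := by
      by_contra hc; push_neg at hc; exact hy (funext fun i => hc i)
    set z₀ : Fin m → ℂ := (y j)⁻¹ • (Pi.single j (1:ℂ) : Fin m → ℂ) with hz₀
    have hyz₀ : cdot y z₀ = 1 := by
      rw [hz₀, cdot_smul, cdot_single, inv_mul_cancel₀ hj]
    have hall : ∀ z, cdot x z = cdot x z₀ * cdot y z := by
      intro z
      have h0 : cdot y (z - cdot y z • z₀) = 0 := by
        rw [cdot_sub, cdot_smul, hyz₀]; ring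
      have h1 := hker _ h0
      rw [cdot_sub, cdot_smul] at h1
      linear_combination h1
    apply h (cdot x z₀)
    funext i
    have h2 := hall (Pi.single i 1)
    rw [cdot_single, cdot_single] at h2
    simpa using h2
  · push_neg at hker
    obtain ⟨z, hyz, hxz⟩ := hker
    exact ⟨(cdot x z)⁻¹ • z, by rw [cdot_smul, inv_mul_cancel₀ hxz],
      by rw [cdot_smul, hyz, mul_zero]⟩

/-- For `n ≥ 1` and `d ≥ 3`, the degree-`d` Veronese embedding of `P^n`
is skew: for nonzero non-proportional `x, y ∈ ℂ^(n+1)`, the spans of the partial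
derivative vectors of the Veronese lifting at `x` and at `y` intersect trivially. -/
theorem veronese_skew (n d : ℕ) (hn : 1 ≤ n) (hd : 3 ≤ d)
    (x y : Fin (n + 1) → ℂ) (hx : x ≠ 0) (hy : y ≠ 0)
    (hprop : ∀ c : ℂ, y ≠ c • x) :
    Submodule.span ℂ (Set.range (veronesePartial n d x)) ⊓
      Submodule.span ℂ (Set.range (veronesePartial n d y)) = ⊥ := by
  have hd1 : 1 ≤ d := by omega
  have hdC : (d : ℂ) ≠ 0 := Nat.cast_ne_zero.mpr (by omega)
  have hprop' : ∀ c : ℂ, x ≠ c • y := by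
    intro c hxc
    rcases eq_or_ne c 0 with rfl | hc
    · rw [zero_smul] at hxc; exact hx hxc
    · exact hprop c⁻¹ (by rw [hxc, smul_smul, inv_mul_cancel₀ hc, one_smul])
  obtain ⟨u, hxu, hyu⟩ := exists_dual x y hx hy hprop'
  obtain ⟨w, hyw, hxw⟩ := exists_dual y x hy hx hprop
  rw [Submodule.eq_bot_iff]
  intro v hv
  rw [Submodule.mem_inf] at hv
  obtain ⟨hvx, hvy⟩ := hv
  obtain ⟨c, hc⟩ := (Submodule.mem_span_range_iff_exists_fun ℂ).mp hvx
  obtain ⟨b, hb⟩ := (Submodule.mem_span_range_iff_exists_fun ℂ).mp hvy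
  have key : ∀ z : Fin (n + 1) → ℂ,
      cdot c z * cdot x z ^ (d - 1) = cdot b z * cdot y z ^ (d - 1) := by
    intro z
    have haux : ∀ (a : Fin (n + 1) → ℂ) (c' : Fin (n + 1) → ℂ),
        (∑ l, c' l • veronesePartial n d a l = v) →
        vPair n d z v = (d : ℂ) * (cdot c' z * cdot a z ^ (d - 1)) := by
      intro a c' hsum
      rw [← hsum, vPair_sum]
      have h7 : ∀ l ∈ (Finset.univ : Finset (Fin (n + 1))),
          c' l * vPair n d z (veronesePartial n d a l)
          = (c' l * z l) * ((d : ℂ) * cdot a z ^ (d - 1)) := by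
        intro l _
        rw [vPair_partial n d hd1]
        ring
      rw [Finset.sum_congr rfl h7, ← Finset.sum_mul]
      unfold cdot
      ring
    have h1 := haux x c hc
    have h2 := haux y b hb
    exact mul_left_cancel₀ hdC (h1.symm.trans h2)
  have hcz : ∀ z, cdot c z = 0 := by
    intro z
    set z₀ : Fin (n + 1) → ℂ := z - cdot x z • u - cdot y z • w with hz0
    have hx0 : cdot x z₀ = 0 := by
      rw [hz0, cdot_sub, cdot_sub, cdot_smul, cdot_smul, hxu, hxw]; ring
    have hy0 : cdot y z₀ = 0 := by
      rw [hz0, cdot_sub, cdot_sub, cdot_smul, cdot_smul, hyu, hyw]; ring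
    have H : ∀ σ τ : ℂ,
        (cdot c z₀ + cdot c u * σ + cdot c w * τ) * σ ^ (d - 1)
        = (cdot b z₀ + cdot b u * σ + cdot b w * τ) * τ ^ (d - 1) := by
      intro σ τ
      have hk := key (z₀ + σ • u + τ • w)
      have e1 : cdot x (z₀ + σ • u + τ • w) = σ := by
        rw [cdot_add, cdot_add, cdot_smul, cdot_smul, hx0, hxu, hxw]; ring
      have e2 : cdot y (z₀ + σ • u + τ • w) = τ := by
        rw [cdot_add, cdot_add, cdot_smul, cdot_smul, hy0, hyu, hyw]; ring
      have e3 : cdot c (z₀ + σ • u + τ • w)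
          = cdot c z₀ + cdot c u * σ + cdot c w * τ := by
        rw [cdot_add, cdot_add, cdot_smul, cdot_smul]; ring
      have e4 : cdot b (z₀ + σ • u + τ • w)
          = cdot b z₀ + cdot b u * σ + cdot b w * τ := by
        rw [cdot_add, cdot_add, cdot_smul, cdot_smul]; ring
      rw [e1, e2, e3, e4] at hk
      exact hk
    obtain ⟨hp, hq, hr⟩ := scalar_aux (by omega : 2 ≤ d - 1) _ _ _ _ _ _ H
    have hzsplit : cdot c z = cdot c z₀ + cdot x z * cdot c u + cdot y z * cdot c w := by
      rw [hz0, cdot_sub, cdot_sub, cdot_smul, cdot_smul]; ring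
    rw [hzsplit, hp, hq, hr]; ring
  have hc0 : ∀ j, c j = 0 := by
    intro j
    have h8 := hcz (Pi.single j 1)
    rwa [cdot_single] at h8
  rw [← hc]
  exact Finset.sum_eq_zero fun l _ => by rw [hc0 l, zero_smul]
end

section
/- Define ι₁, ι₂ : ℂ² → ℂ⁴ by ι₁(t₀, t₁) = (t₀², 2t₀t₁, t₁², 0) and ι₂(t₀, t₁) = (2t₀t₁, t₁², 0, t₀²). Then for all nonzero, non-proportional pairs (t₀, t₁), (s₀, s₁) ∈ ℂ² (i.e. representing distinct points of P¹), the four vectors ι₁(t₀,t₁), ι₂(t₀,t₁), ι₁(s₀,s₁), ι₂(s₀,s₁) are linearly independent in ℂ⁴, equivalently the 4×4 matrix with these columns has nonzero determinant. (Hence the lines ⟨ι₁(t), ι₂(t)⟩ in P³ form a skew scroll of bidegree (2,2): any two distinct lines of the family are disjoint.) -/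
/-- The bidegree `(2,2)` scroll over `P¹` given by
`ι₁(t₀,t₁) = (t₀², 2t₀t₁, t₁², 0)` and `ι₂(t₀,t₁) = (2t₀t₁, t₁², 0, t₀²)` is skew:
for any two distinct points of `P¹`, represented by nonzero non-proportional pairs
`(t₀, t₁)` and `(s₀, s₁)` in `ℂ²`, the four vectors
`ι₁(t₀,t₁), ι₂(t₀,t₁), ι₁(s₀,s₁), ι₂(s₀,s₁)` are linearly independent in `ℂ⁴`. -/
theorem skew_scroll_bidegree_two_two (t₀ t₁ s₀ s₁ : ℂ)
    (ht : (t₀, t₁) ≠ (0, 0)) (hs : (s₀, s₁) ≠ (0, 0))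
    (hprop : ∀ c : ℂ, (s₀, s₁) ≠ (c * t₀, c * t₁)) :
    LinearIndependent ℂ
      ![![t₀ ^ 2, 2 * t₀ * t₁, t₁ ^ 2, 0],
        ![2 * t₀ * t₁, t₁ ^ 2, 0, t₀ ^ 2],
        ![s₀ ^ 2, 2 * s₀ * s₁, s₁ ^ 2, 0],
        ![2 * s₀ * s₁, s₁ ^ 2, 0, s₀ ^ 2]] := by
  have hd : t₀ * s₁ - t₁ * s₀ ≠ 0 := by
    intro h
    rcases eq_or_ne t₀ 0 with h0 | h0
    · have h1 : t₁ ≠ 0 := by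
        intro h1; exact ht (by simp [h0, h1])
      have hs0 : s₀ = 0 := by
        have : t₁ * s₀ = 0 := by linear_combination -h + s₁ * h0
        exact (mul_eq_zero.mp this).resolve_left h1
      exact hprop (s₁ / t₁) (by
        rw [Prod.mk.injEq]
        constructor
        · rw [hs0, h0, mul_zero]
        · field_simp)
    · exact hprop (s₀ / t₀) (by
        rw [Prod.mk.injEq]
        constructor
        · field_simp
        · field_simp; linear_combination h)
  have key : IsUnit (Matrix.of
      ![![t₀ ^ 2, 2 * t₀ * t₁, t₁ ^ 2, 0],
        ![2 * t₀ * t₁, t₁ ^ 2, 0, t₀ ^ 2],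
        ![s₀ ^ 2, 2 * s₀ * s₁, s₁ ^ 2, 0],
        ![2 * s₀ * s₁, s₁ ^ 2, 0, s₀ ^ 2]]) := by
    rw [Matrix.isUnit_iff_isUnit_det, isUnit_iff_ne_zero]
    have : (Matrix.of
      ![![t₀ ^ 2, 2 * t₀ * t₁, t₁ ^ 2, 0],
        ![2 * t₀ * t₁, t₁ ^ 2, 0, t₀ ^ 2],
        ![s₀ ^ 2, 2 * s₀ * s₁, s₁ ^ 2, 0],
        ![2 * s₀ * s₁, s₁ ^ 2, 0, s₀ ^ 2]]).det
        = -(t₀ * s₁ - t₁ * s₀) ^ 4 := by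
      simp [Matrix.det_succ_row_zero, Fin.sum_univ_succ, Fin.succAbove]
      ring
    rw [this]
    simpa using pow_ne_zero 4 hd
  have := Matrix.linearIndependent_rows_iff_isUnit.mpr key
  simpa using this
end

section
/- Let f : ℂ → ℂ³ be an infinitely differentiable (smooth) function with f(0) = 0 and f'(0) = 0. Define α, β : ℂ → ℂ³ × ℂ³ by α(t) = (f(t) − t·f'(t), f'(t)) and β(t) = (−(t/2)·f'(t), f'(t)). Then the iterated derivatives of α and β at 0 agree up to order two: iteratedDeriv k α 0 = iteratedDeriv k β 0 for k = 0, 1, 2. (This is the second-order tangency computation showing that, after blowing up the diagonal of the Grassmannian product, the proper transforms of Γ = γ(X) × γ(X) and of the degeneracy locus D₁ still meet along the blown-up diagonal for a curve X ⊂ P⁴.) -/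
open scoped ContDiff

/-- Let `f : ℂ → ℂ³` be smooth with `f 0 = 0` and `f' 0 = 0`.  Then
the curves `α(t) = (f(t) − t·f'(t), f'(t))` (the Gauss image of the curve
`x_t = (1, t, f(t))` in the Stiefel chart of `Gr(2,5)`) and
`β(t) = (−(t/2)·f'(t), f'(t))` (a curve of rank-`≤ 1` matrices in the degeneracy
locus `D₁`) agree to second order at `0`: their iterated derivatives at `0` coincide
for `k = 0, 1, 2`. -/
theorem gauss_image_tangent_to_degeneracy_locus
    (f : ℂ → Fin 3 → ℂ) (hf : ContDiff ℂ ⊤ f) (hf0 : f 0 = 0)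
    (hf'0 : deriv f 0 = 0) :
    ∀ k : ℕ, k ≤ 2 →
      iteratedDeriv k (fun t : ℂ => (f t - t • deriv f t, deriv f t)) 0 =
      iteratedDeriv k (fun t : ℂ => (-(t / 2) • deriv f t, deriv f t)) 0 := by
  set f' := deriv f with hf'
  set f'' := deriv f' with hf''
  set f''' := deriv f'' with hf'''
  have hfi : ContDiff ℂ ∞ f := hf.of_le le_top
  have hcf' : ContDiff ℂ ∞ f' := (contDiff_infty_iff_deriv.mp hfi).2
  have hcf'' : ContDiff ℂ ∞ f'' := (contDiff_infty_iff_deriv.mp hcf').2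
  have hd1 : ∀ t : ℂ, HasDerivAt f (f' t) t := fun t =>
    (hfi.differentiable (by simp) t).hasDerivAt
  have hd2 : ∀ t : ℂ, HasDerivAt f' (f'' t) t := fun t =>
    (hcf'.differentiable (by simp) t).hasDerivAt
  have hd3 : ∀ t : ℂ, HasDerivAt f'' (f''' t) t := fun t =>
    (hcf''.differentiable (by simp) t).hasDerivAt
  -- derivative of α
  have hdα : ∀ t : ℂ, HasDerivAt (fun t : ℂ => (f t - t • f' t, f' t))
      (-(t • f'' t), f'' t) t := by
    intro t
    have h1 : HasDerivAt (fun t : ℂ => f t - t • f' t) (-(t • f'' t)) t := by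
      have := (hd1 t).sub ((hasDerivAt_id t).smul (hd2 t))
      refine this.congr_deriv ?_
      simp only [id_eq]
      module
    exact h1.prodMk (hd2 t)
  have hderivα : deriv (fun t : ℂ => (f t - t • f' t, f' t)) =
      fun t : ℂ => (-(t • f'' t), f'' t) := funext fun t => (hdα t).deriv
  -- derivative of β
  have hdβ : ∀ t : ℂ, HasDerivAt (fun t : ℂ => (-(t / 2) • f' t, f' t))
      (-((1 / 2 : ℂ) • f' t) - (t / 2) • f'' t, f'' t) t := by
    intro t
    have hc : HasDerivAt (fun t : ℂ => -(t / 2)) (-(1 / 2 : ℂ)) t := by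
      exact ((hasDerivAt_id t).div_const 2).neg
    have h1 := hc.smul (hd2 t)
    have h1' : HasDerivAt (fun t : ℂ => -(t / 2) • f' t)
        (-((1 / 2 : ℂ) • f' t) - (t / 2) • f'' t) t := by
      refine h1.congr_deriv ?_
      module
    exact h1'.prodMk (hd2 t)
  have hderivβ : deriv (fun t : ℂ => (-(t / 2) • f' t, f' t)) =
      fun t : ℂ => (-((1 / 2 : ℂ) • f' t) - (t / 2) • f'' t, f'' t) :=
    funext fun t => (hdβ t).deriv
  intro k hk
  interval_cases k
  · simp [iteratedDeriv_zero, hf0, ← hf', hf'0]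
  · simp only [iteratedDeriv_one]
    rw [hderivα, hderivβ]
    simp [hf'0]
  · simp only [iteratedDeriv_succ, iteratedDeriv_one, iteratedDeriv_zero]
    rw [hderivα, hderivβ]
    have hα2 : HasDerivAt (fun t : ℂ => (-(t • f'' t), f'' t))
        (-(f'' 0), f''' 0) 0 := by
      have h1 : HasDerivAt (fun t : ℂ => -(t • f'' t))
          (-(f'' 0)) 0 := by
        have := ((hasDerivAt_id (0:ℂ)).smul (hd3 0)).neg
        refine this.congr_deriv ?_
        simp
      exact h1.prodMk (hd3 0)
    have hβ2 : HasDerivAt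
        (fun t : ℂ => -((1 / 2 : ℂ) • f' t) - (t / 2) • f'' t)
        (-(f'' 0)) 0 := by
      have hc : HasDerivAt (fun t : ℂ => t / 2) (1 / 2 : ℂ) 0 := by
        simpa using (hasDerivAt_id (0:ℂ)).div_const 2
      have := (((hd2 0).const_smul ((1:ℂ)/2)).neg).sub (hc.smul (hd3 0))
      refine this.congr_deriv ?_
      ext t
      simp
      ring
    rw [hα2.deriv, (hβ2.prodMk (hd3 0)).deriv]
end

section
/- Let f : ℂ → ℂ³ be an infinitely differentiable (smooth) function with f(0) = 0, f'(0) = 0, and such that f''(0) and f'''(0) are linearly independent over ℂ. Define α : ℂ → ℂ³ × ℂ³ by α(t) = (f(t) − t·f'(t), f'(t)). Then there exist no smooth functions a : ℂ → ℂ and g : ℂ → ℂ³ such that the curve ρ : ℂ → ℂ³ × ℂ³ defined by ρ(t) = (a(t)·g(t), g(t)) satisfies iteratedDeriv k ρ 0 = iteratedDeriv k α 0 for all k = 0, 1, 2, 3. (This is the third-order non-tangency computation showing that, after a second blowup, the proper transforms D₁^† and Γ^† meet in a reduced curve along the diagonal, for a curve X ⊂ P⁴ with nowhere degenerate third osculating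 planes.) -/
open scoped ContDiff

private lemma iteratedDeriv_prod_fun {E F : Type*} [NormedAddCommGroup E] [NormedSpace ℂ E]
    [NormedAddCommGroup F] [NormedSpace ℂ F] {u : ℂ → E} {v : ℂ → F}
    (hu : ContDiff ℂ ∞ u) (hv : ContDiff ℂ ∞ v) (k : ℕ) :
    iteratedDeriv k (fun t => (u t, v t)) =
      fun t => (iteratedDeriv k u t, iteratedDeriv k v t) := by
  induction k with
  | zero => simp [iteratedDeriv_zero]
  | succ n ih =>
    rw [iteratedDeriv_succ, ih]
    funext t
    have hu' : DifferentiableAt ℂ (iteratedDeriv n u) t := by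
      rw [iteratedDeriv_eq_iterate]
      exact ((hu.iterate_deriv n).differentiable (by norm_num)) t
    have hv' : DifferentiableAt ℂ (iteratedDeriv n v) t := by
      rw [iteratedDeriv_eq_iterate]
      exact ((hv.iterate_deriv n).differentiable (by norm_num)) t
    rw [(hu'.hasDerivAt.prodMk hv'.hasDerivAt).deriv, iteratedDeriv_succ, iteratedDeriv_succ]

/-- Let `f : ℂ → ℂ³` be smooth with `f 0 = 0`, `f' 0 = 0`, and with
`f''(0)` and `f'''(0)` linearly independent over `ℂ` (nondegenerate third osculating
plane).  Then no smooth curve `ρ(t) = (a(t)·g(t), g(t))` of rank-`≤ 1` matrices agrees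
with the Gauss image `α(t) = (f(t) − t·f'(t), f'(t))` to third order at `0`. -/
theorem gauss_image_not_third_order_tangent
    (f : ℂ → Fin 3 → ℂ) (hf : ContDiff ℂ ⊤ f) (hf0 : f 0 = 0)
    (hf'0 : deriv f 0 = 0)
    (hosc : LinearIndependent ℂ ![iteratedDeriv 2 f 0, iteratedDeriv 3 f 0]) :
    ¬ ∃ (a : ℂ → ℂ) (g : ℂ → Fin 3 → ℂ), ContDiff ℂ ⊤ a ∧ ContDiff ℂ ⊤ g ∧
      ∀ k : ℕ, k ≤ 3 →
        iteratedDeriv k (fun t : ℂ => (a t • g t, g t)) 0 =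
        iteratedDeriv k (fun t : ℂ => (f t - t • deriv f t, deriv f t)) 0 := by
  rintro ⟨a, g, ha, hg, h⟩
  -- smoothness bookkeeping
  replace hf : ContDiff ℂ ∞ f := hf.of_le le_top
  replace ha : ContDiff ℂ ∞ a := ha.of_le le_top
  replace hg : ContDiff ℂ ∞ g := hg.of_le le_top
  have hf1 : ContDiff ℂ ∞ (deriv f) := (contDiff_infty_iff_deriv.mp hf).2
  have hf2 : ContDiff ℂ ∞ (deriv (deriv f)) := (contDiff_infty_iff_deriv.mp hf1).2
  have hf3 : ContDiff ℂ ∞ (deriv (deriv (deriv f))) := (contDiff_infty_iff_deriv.mp hf2).2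
  have ha1 : ContDiff ℂ ∞ (deriv a) := (contDiff_infty_iff_deriv.mp ha).2
  have ha2 : ContDiff ℂ ∞ (deriv (deriv a)) := (contDiff_infty_iff_deriv.mp ha1).2
  have hg1 : ContDiff ℂ ∞ (deriv g) := (contDiff_infty_iff_deriv.mp hg).2
  have hg2 : ContDiff ℂ ∞ (deriv (deriv g)) := (contDiff_infty_iff_deriv.mp hg1).2
  have had := ha.differentiable (by norm_num)
  have had1 := ha1.differentiable (by norm_num)
  have had2 := ha2.differentiable (by norm_num)
  have hgd := hg.differentiable (by norm_num)
  have hgd1 := hg1.differentiable (by norm_num)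
  have hgd2 := hg2.differentiable (by norm_num)
  have hfd := hf.differentiable (by norm_num)
  have hfd1 := hf1.differentiable (by norm_num)
  have hfd2 := hf2.differentiable (by norm_num)
  have hfd3 := hf3.differentiable (by norm_num)
  set c2 := deriv (deriv f) 0 with hc2
  set c3 := deriv (deriv (deriv f)) 0 with hc3
  -- c2, c3 equal the iterated derivatives in `hosc`
  have hi2 : iteratedDeriv 2 f 0 = c2 := by
    rw [iteratedDeriv_succ, iteratedDeriv_one]
  have hi3 : iteratedDeriv 3 f 0 = c3 := by
    rw [iteratedDeriv_succ, iteratedDeriv_succ, iteratedDeriv_one]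
  rw [hi2, hi3] at hosc
  have hc2ne : c2 ≠ 0 := by
    have := hosc.ne_zero 0
    simpa using this
  -- derivatives of the first Gauss component
  have hα1 : deriv (fun t : ℂ => f t - t • deriv f t)
      = fun t => -(t • deriv (deriv f) t) := by
    funext t
    have h1 : HasDerivAt (fun t : ℂ => t • deriv f t)
        (t • deriv (deriv f) t + deriv f t) t := by
      simpa using (hasDerivAt_id t).fun_smul (hfd1 t).hasDerivAt
    have h2 := ((hfd t).hasDerivAt.fun_sub h1).deriv
    rw [h2]; abel
  have hα2 : deriv (deriv (fun t : ℂ => f t - t • deriv f t))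
      = fun t => -(deriv (deriv f) t + t • deriv (deriv (deriv f)) t) := by
    rw [hα1]
    funext t
    have h1 : HasDerivAt (fun t : ℂ => t • deriv (deriv f) t)
        (t • deriv (deriv (deriv f)) t + deriv (deriv f) t) t := by
      simpa using (hasDerivAt_id t).fun_smul (hfd2 t).hasDerivAt
    have h2 := h1.fun_neg.deriv
    rw [h2]; abel
  have hα3 : deriv (deriv (deriv (fun t : ℂ => f t - t • deriv f t))) 0 = -(c3 + c3) := by
    rw [hα2]
    have h1 : HasDerivAt (fun t : ℂ => t • deriv (deriv (deriv f)) t)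
        ((0 : ℂ) • deriv (deriv (deriv (deriv f))) 0 + deriv (deriv (deriv f)) 0) 0 := by
      simpa using (hasDerivAt_id (0:ℂ)).fun_smul (hfd3 0).hasDerivAt
    have h2 := (((hfd2 0).hasDerivAt.fun_add h1).fun_neg).deriv
    rw [h2]; simp [hc3]
  -- derivatives of a • g
  have hA1 : deriv (fun t : ℂ => a t • g t)
      = fun t => a t • deriv g t + deriv a t • g t := by
    funext t; exact deriv_smul (had t) (hgd t)
  have hA2 : deriv (deriv (fun t : ℂ => a t • g t))
      = fun t => (a t • deriv (deriv g) t + deriv a t • deriv g t)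
          + (deriv a t • deriv g t + deriv (deriv a) t • g t) := by
    rw [hA1]
    funext t
    have h1 : HasDerivAt (fun t : ℂ => a t • deriv g t)
        (a t • deriv (deriv g) t + deriv a t • deriv g t) t :=
      (had t).hasDerivAt.smul (hgd1 t).hasDerivAt
    have h2 : HasDerivAt (fun t : ℂ => deriv a t • g t)
        (deriv a t • deriv g t + deriv (deriv a) t • g t) t :=
      (had1 t).hasDerivAt.smul (hgd t).hasDerivAt
    exact (h1.add h2).deriv
  have hA3 : deriv (deriv (deriv (fun t : ℂ => a t • g t))) 0
      = ((a 0 • deriv (deriv (deriv g)) 0 + deriv a 0 • deriv (deriv g) 0)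
          + (deriv a 0 • deriv (deriv g) 0 + deriv (deriv a) 0 • deriv g 0))
        + ((deriv a 0 • deriv (deriv g) 0 + deriv (deriv a) 0 • deriv g 0)
          + (deriv (deriv a) 0 • deriv g 0 + deriv (deriv (deriv a)) 0 • g 0)) := by
    rw [hA2]
    have h1 : HasDerivAt (fun t : ℂ => a t • deriv (deriv g) t)
        (a 0 • deriv (deriv (deriv g)) 0 + deriv a 0 • deriv (deriv g) 0) 0 :=
      (had 0).hasDerivAt.smul (hgd2 0).hasDerivAt
    have h2 : HasDerivAt (fun t : ℂ => deriv a t • deriv g t)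
        (deriv a 0 • deriv (deriv g) 0 + deriv (deriv a) 0 • deriv g 0) 0 :=
      (had1 0).hasDerivAt.smul (hgd1 0).hasDerivAt
    have h3 : HasDerivAt (fun t : ℂ => deriv (deriv a) t • g t)
        (deriv (deriv a) 0 • deriv g 0 + deriv (deriv (deriv a)) 0 • g 0) 0 :=
      (had2 0).hasDerivAt.smul (hgd 0).hasDerivAt
    exact (((h1.add h2).add (h2.add h3)).deriv)
  -- rewrite the hypotheses componentwise
  have hsmooth : ContDiff ℂ ∞ (fun t : ℂ => a t • g t) := ha.smul hg
  have hαs : ContDiff ℂ ∞ (fun t : ℂ => f t - t • deriv f t) :=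
    hf.sub (contDiff_id.smul hf1)
  have key : ∀ k : ℕ, k ≤ 3 →
      iteratedDeriv k (fun t : ℂ => a t • g t) 0 =
        iteratedDeriv k (fun t : ℂ => f t - t • deriv f t) 0 ∧
      iteratedDeriv k g 0 = iteratedDeriv k (deriv f) 0 := by
    intro k hk
    have := h k hk
    rw [iteratedDeriv_prod_fun hsmooth hg k, iteratedDeriv_prod_fun hαs hf1 k] at this
    exact ⟨congrArg Prod.fst this, congrArg Prod.snd this⟩
  -- extract the equations
  have E0 : g 0 = 0 := by
    have := (key 0 (by norm_num)).2
    simpa [hf'0] using this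
  have E1snd : deriv g 0 = c2 := by
    have := (key 1 (by norm_num)).2
    simpa [iteratedDeriv_one] using this
  have E2snd : deriv (deriv g) 0 = c3 := by
    have := (key 2 (by norm_num)).2
    rwa [iteratedDeriv_succ, iteratedDeriv_one, iteratedDeriv_succ, iteratedDeriv_one] at this
  have E1 : a 0 • deriv g 0 + deriv a 0 • g 0 = 0 := by
    have := (key 1 (by norm_num)).1
    rw [iteratedDeriv_one, iteratedDeriv_one, hA1, hα1] at this
    simpa using this
  have ha0 : a 0 = 0 := by
    rw [E0, E1snd, smul_zero, add_zero, smul_eq_zero] at E1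
    exact E1.resolve_right hc2ne
  have E2 : (a 0 • deriv (deriv g) 0 + deriv a 0 • deriv g 0)
      + (deriv a 0 • deriv g 0 + deriv (deriv a) 0 • g 0) = -c2 := by
    have := (key 2 (by norm_num)).1
    rw [iteratedDeriv_succ, iteratedDeriv_one, iteratedDeriv_succ, iteratedDeriv_one,
      hA2, hα2] at this
    simpa [hc2] using this
  have ha1 : deriv a 0 = -(1/2 : ℂ) := by
    rw [ha0, E0, E1snd, zero_smul, zero_add, smul_zero, add_zero] at E2
    have h2 : (deriv a 0 + deriv a 0 + 1) • c2 = 0 := by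
      rw [add_smul, add_smul, one_smul, E2]
      abel
    have := (smul_eq_zero.mp h2).resolve_right hc2ne
    linear_combination this / 2
  have E3 : ((a 0 • deriv (deriv (deriv g)) 0 + deriv a 0 • deriv (deriv g) 0)
          + (deriv a 0 • deriv (deriv g) 0 + deriv (deriv a) 0 • deriv g 0))
        + ((deriv a 0 • deriv (deriv g) 0 + deriv (deriv a) 0 • deriv g 0)
          + (deriv (deriv a) 0 • deriv g 0 + deriv (deriv (deriv a)) 0 • g 0))
        = -(c3 + c3) := by
    have := (key 3 (by norm_num)).1
    rw [iteratedDeriv_succ, iteratedDeriv_succ, iteratedDeriv_one,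
      iteratedDeriv_succ, iteratedDeriv_succ, iteratedDeriv_one, hA3] at this
    rw [this, hα3]
  -- final contradiction via linear independence
  rw [ha0, E0, E1snd, E2snd, zero_smul, zero_add, smul_zero, add_zero] at E3
  have hlin : ((3 : ℂ) * deriv (deriv a) 0) • c2 + ((3 : ℂ) * deriv a 0 + 2) • c3 = 0 := by
    linear_combination (norm := module) E3
  have := (LinearIndependent.pair_iff.mp hosc _ _ hlin).2
  rw [ha1] at this
  norm_num at this
end
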